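/- arXiv:2507.22535 — 3 statements merged into one kernel-verified Lean document; each statement's English description precedes it below -/
import Mathlib

section
/- Let d > 0, c = 1/√(9d), and define g(x) = 3d·ln(1 + cx) − d(1 + cx)³ + d for x > −1/c. Then g(x) ≤ −x²/2 for all x > −1/c. -/
/-!
With `u = c x`, the normalisation `9 d c² = 1` turns the claim into `d` times the
third-order Taylor bound `log (1 + u) ≤ u - u² / 2 + u³ / 3` for `u > -1`. That bound holds
because the difference of its two sides has derivative `u³ / (1 + u)`, which changes sign
only at `u = 0`, where the difference vanishes.
-/

open Real Set

lemma hasDerivAt_taylor_three_sub_log_one_add {u : ℝ} (hu : -1 < u) :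
    HasDerivAt (fun u => u - u ^ 2 / 2 + u ^ 3 / 3 - log (1 + u)) (u ^ 3 / (1 + u)) u := by
  have hu' : 1 + u ≠ 0 := by linarith
  have hlog : HasDerivAt (fun u => log (1 + u)) (1 / (1 + u)) u := by
    simpa using ((hasDerivAt_id u).const_add 1).log hu'
  refine ((((hasDerivAt_id' u).fun_sub ((hasDerivAt_pow 2 u).div_const 2)).fun_add
    ((hasDerivAt_pow 3 u).div_const 3)).fun_sub hlog).congr_deriv ?_
  field_simp
  ring

lemma log_one_add_le_taylor_three {u : ℝ} (hu : -1 < u) :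
    log (1 + u) ≤ u - u ^ 2 / 2 + u ^ 3 / 3 := by
  set f : ℝ → ℝ := fun u => u - u ^ 2 / 2 + u ^ 3 / 3 - log (1 + u)
  have hderiv : ∀ v ∈ Ioi (-1 : ℝ), HasDerivAt f (v ^ 3 / (1 + v)) v :=
    fun v hv => hasDerivAt_taylor_three_sub_log_one_add hv
  have hdiff : DifferentiableOn ℝ f (Ioi (-1)) :=
    fun v hv => (hderiv v hv).differentiableAt.differentiableWithinAt
  have hmin : IsMinOn f (Ioi (-1)) 0 := by
    refine isMinOn_Ioi_of_deriv (hderiv 0 (by norm_num)).continuousAt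
      (hdiff.mono Ioo_subset_Ioi_self) (hdiff.mono (Ioi_subset_Ioi (by norm_num))) ?_ ?_
    · rintro v ⟨hv₁, hv₂⟩
      rw [(hderiv v hv₁).deriv]
      exact div_nonpos_of_nonpos_of_nonneg (Odd.pow_nonpos (by decide) hv₂.le) (by linarith)
    · intro v hv
      rw [(hderiv v (lt_trans (by norm_num : (-1 : ℝ) < 0) hv)).deriv]
      exact div_nonneg (pow_nonneg (le_of_lt hv) 3) (by linarith [mem_Ioi.mp hv])
  have h : f 0 ≤ f u := hmin hu
  simpa [f, sub_nonneg] using h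

/-- Let `d > 0`, `c = 1/√(9d)`, and `g(x) = 3d ln(1+cx) − d(1+cx)³ + d` for `x > −1/c`.
Then `g(x) ≤ −x²/2`. -/
theorem g_le_neg_half_sq (d : ℝ) (hd : 0 < d) (c : ℝ) (hc : c = 1 / Real.sqrt (9 * d))
    (x : ℝ) (hx : -1 / c < x) :
    3 * d * Real.log (1 + c * x) - d * (1 + c * x) ^ 3 + d ≤ -x ^ 2 / 2 := by
  have hc₀ : 0 < c := by rw [hc]; positivity
  have hcx : -1 < c * x := by
    rw [div_lt_iff₀ hc₀] at hx
    linarith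
  have hnorm : 9 * d * c ^ 2 = 1 := by
    rw [hc, div_pow, one_pow, sq_sqrt (by positivity)]
    field_simp
  calc 3 * d * log (1 + c * x) - d * (1 + c * x) ^ 3 + d
      ≤ 3 * d * (c * x - (c * x) ^ 2 / 2 + (c * x) ^ 3 / 3) - d * (1 + c * x) ^ 3 + d := by
        gcongr
        exact log_one_add_le_taylor_three hcx
    _ = -(9 * d * c ^ 2) * x ^ 2 / 2 := by ring
    _ = -x ^ 2 / 2 := by rw [hnorm]; ring
end

section
/- Define p(α) = e^{α − 1/3} · √(α − 1/3) · Γ(α) / (√(2π) · (α − 1/3)^α) for real α ≥ 1. Then p(α) > 0.95 for every integer α ≥ 1. -/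
/-!
Writing `α = n + 1` and `c = n + 2/3`, we have `log p(α) = c + log n! - log(2π)/2 - (n + 1/2) log c`.
Stirling's lower bound `n! ≥ √(2πn) (n/e)^n` turns this into
`log p(α) ≥ 2/3 - (n + 1/2) log (1 + 2/(3n))`, and the trapezoid bound `log y ≤ (y - 1/y)/2`
makes the right-hand side at least `-1/20 > log 0.95` once `n ≥ 3`. The three remaining values
`p(1) ≈ 0.9517`, `p(2) ≈ 0.982`, `p(3) ≈ 0.989` are checked numerically.
-/

open Real
open scoped Nat

/-- The paper's `p(α)`: `Γ(α)` divided by its Stirling approximation centred at `α - 1/3`. -/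
noncomputable def stirlingRatio (a : ℝ) : ℝ :=
  exp (a - 1/3) * √(a - 1/3) * Gamma a / (√(2 * π) * (a - 1/3) ^ a)

lemma stirlingRatio_pos {a : ℝ} (ha : 1/3 < a) : 0 < stirlingRatio a := by
  have hΓ : 0 < Gamma a := Gamma_pos_of_pos (by linarith)
  have hb : 0 < a - 1/3 := by linarith
  unfold stirlingRatio
  positivity

lemma stirlingRatio_natCast_succ (n : ℕ) :
    stirlingRatio (n + 1) =
      exp (n + 2/3) * √(n + 2/3) * n ! / (√(2 * π) * (n + 2/3 : ℝ) ^ (n + 1)) := by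
  rw [stirlingRatio, Gamma_nat_eq_factorial, show (n : ℝ) + 1 - 1/3 = n + 2/3 by ring,
    ← Nat.cast_add_one, rpow_natCast]

lemma log_stirlingRatio_natCast_succ (n : ℕ) :
    log (stirlingRatio (n + 1)) =
      n + 2/3 + log n ! - log (2 * π) / 2 - (n + 1/2) * log (n + 2/3) := by
  have hc : (0 : ℝ) < n + 2/3 := by positivity
  rw [stirlingRatio_natCast_succ, log_div (by positivity) (by positivity),
    log_mul (by positivity) (by positivity), log_mul (by positivity) (by positivity),
    log_mul (by positivity) (by positivity), log_exp, log_sqrt hc.le,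
    log_sqrt (by positivity), log_pow]
  push_cast
  ring

/-- The sixth power clears both the square roots and the fractional exponent of `e`. -/
lemma stirlingRatio_natCast_succ_pow_six (n : ℕ) :
    stirlingRatio (n + 1) ^ 6 =
      exp 1 ^ (6 * n + 4) * (n ! : ℝ) ^ 6 / ((2 * π) ^ 3 * (n + 2/3 : ℝ) ^ (6 * n + 3)) := by
  have hc : (0 : ℝ) < n + 2/3 := by positivity
  have hexp : exp (n + 2/3) ^ 6 = exp 1 ^ (6 * n + 4) := by
    rw [← exp_nat_mul, ← exp_nat_mul]; push_cast; ring_nf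
  have hsq (x : ℝ) (hx : 0 ≤ x) : √x ^ 6 = x ^ 3 := by
    rw [show 6 = 2 * 3 by rfl, pow_mul, sq_sqrt hx]
  rw [stirlingRatio_natCast_succ, div_pow, mul_pow, mul_pow, mul_pow, hexp, hsq _ hc.le,
    hsq _ (by positivity)]
  field_simp
  ring

lemma log_le_half_sub_inv {y : ℝ} (hy : 1 ≤ y) : log y ≤ (y - y⁻¹) / 2 := by
  rw [← sinh_log (by positivity)]
  exact self_le_sinh_iff.mpr (log_nonneg hy)

lemma two_thirds_sub_le_log_stirlingRatio {n : ℕ} (hn : n ≠ 0) :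
    2/3 - (n + 1/2) * log ((n + 2/3) / n) ≤ log (stirlingRatio (n + 1)) := by
  have hn' : (0 : ℝ) < n := by positivity
  rw [log_stirlingRatio_natCast_succ, log_div (by positivity) hn'.ne']
  linarith [Stirling.le_log_factorial_stirling hn]

lemma add_half_mul_log_add_two_thirds_div_le {x : ℝ} (hx : 3 ≤ x) :
    (x + 1/2) * log ((x + 2/3) / x) ≤ 43/60 := by
  have hx0 : 0 < x := by linarith
  have hy : 1 ≤ (x + 2/3) / x := by rw [le_div_iff₀ hx0]; linarith
  calc (x + 1/2) * log ((x + 2/3) / x)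
      ≤ (x + 1/2) * (((x + 2/3) / x - ((x + 2/3) / x)⁻¹) / 2) := by
        gcongr; exact log_le_half_sub_inv hy
    _ ≤ 43/60 := by
        rw [inv_div, div_sub_div _ _ hx0.ne' (by positivity), div_div,
          mul_div_assoc', div_le_iff₀ (by positivity)]
        nlinarith

lemma stirlingRatio_natCast_succ_gt_of_three_le {n : ℕ} (hn : 3 ≤ n) :
    0.95 < stirlingRatio (n + 1) := by
  -- `43/60 = 2/3 + 1/20`
  have hlog : log 0.95 < -1/20 := by
    linarith [log_lt_sub_one_of_pos (x := 0.95) (by norm_num) (by norm_num)]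
  rw [← log_lt_log_iff (by norm_num) (stirlingRatio_pos (by linarith [n.cast_nonneg (α := ℝ)]))]
  linarith [two_thirds_sub_le_log_stirlingRatio (n := n) (by omega),
    add_half_mul_log_add_two_thirds_div_le (x := n) (by exact_mod_cast hn)]

lemma stirlingRatio_natCast_succ_gt_of_lt_three {n : ℕ} (hn : n < 3) :
    0.95 < stirlingRatio (n + 1) := by
  refine lt_of_pow_lt_pow_left₀ 6 (stirlingRatio_pos (by linarith [n.cast_nonneg (α := ℝ)])).le ?_
  rw [stirlingRatio_natCast_succ_pow_six, lt_div_iff₀ (by positivity)]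
  calc 0.95 ^ 6 * ((2 * π) ^ 3 * (n + 2/3 : ℝ) ^ (6 * n + 3))
      < 0.95 ^ 6 * ((2 * 3.1416) ^ 3 * (n + 2/3 : ℝ) ^ (6 * n + 3)) := by
        gcongr; exact pi_lt_d4
    _ < 2.7182818283 ^ (6 * n + 4) * (n ! : ℝ) ^ 6 := by
        interval_cases n <;> norm_num [Nat.factorial]
    _ ≤ exp 1 ^ (6 * n + 4) * (n ! : ℝ) ^ 6 := by
        gcongr; exact exp_one_gt_d9.le

/-- For `p(α) = e^{α−1/3} √(α−1/3) Γ(α) / (√(2π) (α−1/3)^α)`, we have `p(α) > 0.95` for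
every integer `α ≥ 1`. -/
theorem p_gt (α : ℕ) (hα : 1 ≤ α) :
    0.95 < Real.exp ((α : ℝ) - 1/3) * Real.sqrt ((α : ℝ) - 1/3) * Real.Gamma (α : ℝ) /
      (Real.sqrt (2 * Real.pi) * ((α : ℝ) - 1/3) ^ ((α : ℝ))) := by
  obtain ⟨n, rfl⟩ := Nat.exists_eq_add_of_le' hα
  change 0.95 < stirlingRatio ((n + 1 : ℕ) : ℝ)
  push_cast
  rcases lt_or_ge n 3 with hn | hn
  · exact stirlingRatio_natCast_succ_gt_of_lt_three hn
  · exact stirlingRatio_natCast_succ_gt_of_three_le hn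
end

section
/- Let d > 0, c = 1/√(9d), and s(x) = x²/2 + d − d(1+cx)³ + 3d·ln(1+cx) on (−1/c, ∞). Then s'(x)² + s''(x) = c²x²(c²x⁴ − 6cx − 9)/(9(cx+1)²), and the polynomial w(x) = c²x⁴ − 6cx − 9 has exactly one real root in (−1/c, 0) and exactly one real root in (0, ∞) whenever 9d > 3. -/
/-!
Once `9 d c² = 1`, the derivatives of `s` collapse to `s'(x) = -c²x³/(3(1 + cx))` and
`s''(x) = -c²x²(3 + 2cx)/(3(1 + cx)²)`, so the identity is algebra.

The quartic `w` is convex with `w(0) = -9 < 0`, so it has at most one root on each side of `0`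
(a second root would lie strictly inside a chord with one negative end). Existence is the
intermediate value theorem: `w(-1/c) = 1/c² - 3 = 9d - 3 > 0`, and `w` is positive far to the
right.
-/

open Set Topology

noncomputable def sFun (c d x : ℝ) : ℝ :=
  x ^ 2 / 2 + d - d * (1 + c * x) ^ 3 + 3 * d * Real.log (1 + c * x)

section Potential

variable {c d x : ℝ}

theorem hasDerivAt_sFun (hx : 0 < 1 + c * x) :
    HasDerivAt (sFun c d) (x - 3 * d * c * (1 + c * x) ^ 2 + 3 * d * c / (1 + c * x)) x := by
  have hlin : HasDerivAt (fun y => 1 + c * y) c x := by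
    simpa using ((hasDerivAt_id x).const_mul c).const_add 1
  have hquad : HasDerivAt (fun y : ℝ => y ^ 2 / 2 + d) x x := by
    simpa using ((hasDerivAt_pow 2 x).div_const 2).add_const d
  refine ((hquad.sub ((hlin.pow 3).const_mul d)).add
    ((hlin.log hx.ne').const_mul (3 * d))).congr_deriv ?_
  push_cast
  ring

theorem deriv_sFun_eventuallyEq (hx : 0 < 1 + c * x) :
    deriv (sFun c d) =ᶠ[𝓝 x]
      fun y => y - 3 * d * c * (1 + c * y) ^ 2 + 3 * d * c / (1 + c * y) := by
  have hopen : IsOpen {y : ℝ | 0 < 1 + c * y} := isOpen_lt continuous_const (by fun_prop)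
  filter_upwards [hopen.mem_nhds hx] with y hy
  exact (hasDerivAt_sFun hy).deriv

theorem deriv_deriv_sFun (hx : 0 < 1 + c * x) :
    deriv (deriv (sFun c d)) x
      = 1 - 6 * d * c ^ 2 * (1 + c * x) - 3 * d * c ^ 2 / (1 + c * x) ^ 2 := by
  have hlin : HasDerivAt (fun y => 1 + c * y) c x := by
    simpa using ((hasDerivAt_id x).const_mul c).const_add 1
  rw [(deriv_sFun_eventuallyEq hx).deriv_eq]
  refine (((hasDerivAt_id x).sub ((hlin.pow 2).const_mul (3 * d * c))).add
    ((hlin.inv hx.ne').const_mul (3 * d * c))).deriv.trans ?_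
  field_simp
  ring

theorem deriv_sFun_sq_add_deriv_deriv (hcd : 9 * d * c ^ 2 = 1) (hx : 0 < 1 + c * x) :
    deriv (sFun c d) x ^ 2 + deriv (deriv (sFun c d)) x
      = c ^ 2 * x ^ 2 * (c ^ 2 * x ^ 4 - 6 * c * x - 9) / (9 * (c * x + 1) ^ 2) := by
  have hc : c ≠ 0 := by rintro rfl; simp at hcd
  have hd : d = 1 / (9 * c ^ 2) := by field_simp; linarith
  have hu : 1 + x * c ≠ 0 := by rw [mul_comm]; exact hx.ne'
  rw [(hasDerivAt_sFun hx).deriv, deriv_deriv_sFun hx, add_comm (c * x), hd]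
  field_simp
  ring

end Potential

section ConvexZeros

variable {f : ℝ → ℝ} {a b : ℝ}

theorem ConvexOn.subsingleton_zeros_Ioi (hf : ConvexOn ℝ univ f) (ha : f a < 0) :
    {x | x ∈ Ioi a ∧ f x = 0}.Subsingleton := by
  have key : ∀ x y, a < x → x < y → f x = 0 → f y ≠ 0 := fun x y hax hxy hx hy =>
    (hf.lt_right_of_left_lt (mem_univ a) (mem_univ y)
      (by rw [openSegment_eq_Ioo (hax.trans hxy)]; exact ⟨hax, hxy⟩) (by linarith)).ne'
      (by linarith)
  rintro x ⟨hax, hx⟩ y ⟨hay, hy⟩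
  rcases lt_trichotomy x y with hxy | rfl | hyx
  · exact absurd hy (key x y hax hxy hx)
  · rfl
  · exact absurd hx (key y x hay hyx hy)

theorem ConvexOn.subsingleton_zeros_Iio (hf : ConvexOn ℝ univ f) (ha : f a < 0) :
    {x | x ∈ Iio a ∧ f x = 0}.Subsingleton := by
  have key : ∀ x y, x < y → y < a → f y = 0 → f x ≠ 0 := fun x y hxy hya hy hx =>
    (hf.lt_left_of_right_lt (mem_univ x) (mem_univ a)
      (by rw [openSegment_eq_Ioo (hxy.trans hya)]; exact ⟨hxy, hya⟩) (by linarith)).ne'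
      (by linarith)
  rintro x ⟨hxa, hx⟩ y ⟨hya, hy⟩
  rcases lt_trichotomy x y with hxy | rfl | hyx
  · exact absurd hx (key x y hxy hya hy)
  · rfl
  · exact absurd hy (key y x hyx hxa hx)

theorem ConvexOn.existsUnique_zero_Ioi (hf : ConvexOn ℝ univ f) (hcont : Continuous f)
    (hab : a ≤ b) (ha : f a < 0) (hb : 0 < f b) : ∃! x, x ∈ Ioi a ∧ f x = 0 := by
  obtain ⟨x, hx, hfx⟩ := intermediate_value_Ioo hab hcont.continuousOn ⟨ha, hb⟩
  exact ⟨x, ⟨hx.1, hfx⟩, fun y hy => hf.subsingleton_zeros_Ioi ha hy ⟨hx.1, hfx⟩⟩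

theorem ConvexOn.existsUnique_zero_Ioo (hf : ConvexOn ℝ univ f) (hcont : Continuous f)
    (hba : b ≤ a) (ha : f a < 0) (hb : 0 < f b) : ∃! x, x ∈ Ioo b a ∧ f x = 0 := by
  obtain ⟨x, hx, hfx⟩ := intermediate_value_Ioo' hba hcont.continuousOn ⟨ha, hb⟩
  exact ⟨x, ⟨hx, hfx⟩,
    fun y hy => hf.subsingleton_zeros_Iio ha ⟨hy.1.2, hy.2⟩ ⟨hx.2, hfx⟩⟩

end ConvexZeros

theorem convexOn_quartic (c : ℝ) :
    ConvexOn ℝ univ fun x : ℝ => c ^ 2 * x ^ 4 - 6 * c * x - 9 := by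
  have hquart : ConvexOn ℝ univ fun x : ℝ => c ^ 2 * x ^ 4 := by
    simpa only [smul_eq_mul] using
      (Even.convexOn_pow (𝕜 := ℝ) (n := 4) ⟨2, rfl⟩).smul (sq_nonneg c)
  have haffine : ConvexOn ℝ univ fun x : ℝ => -(6 * c) * x + -9 :=
    (((LinearMap.mul ℝ ℝ) (-(6 * c))).convexOn convex_univ).add_const (-9)
  exact (hquart.add haffine).congr fun x _ => by simp only [Pi.add_apply]; ring

theorem existsUnique_quartic_root_Ioi {c : ℝ} (hc : 0 < c) :
    ∃! x, x ∈ Ioi (0 : ℝ) ∧ c ^ 2 * x ^ 4 - 6 * c * x - 9 = 0 := by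
  refine (convexOn_quartic c).existsUnique_zero_Ioi (by fun_prop) (b := (3 + c) / c) (by positivity)
    (by norm_num) ?_
  field_simp
  nlinarith

theorem existsUnique_quartic_root_Ioo {c : ℝ} (hc : 0 < c) (hc3 : 3 * c ^ 2 < 1) :
    ∃! x, x ∈ Ioo (-1 / c) 0 ∧ c ^ 2 * x ^ 4 - 6 * c * x - 9 = 0 := by
  refine (convexOn_quartic c).existsUnique_zero_Ioo (by fun_prop)
    (div_neg_of_neg_of_pos (by norm_num) hc).le (by norm_num) ?_
  field_simp
  nlinarith

/-- For `s(x) = x²/2 + d − d(1+cx)³ + 3d ln(1+cx)` with `d > 0`, `c = 1/√(9d)`: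
`s'(x)² + s''(x) = c²x²(c²x⁴ − 6cx − 9)/(9(cx+1)²)` on `(−1/c, ∞)`, and if `9d > 3` the
polynomial `w(x) = c²x⁴ − 6cx − 9` has exactly one real root in `(−1/c, 0)` and exactly
one in `(0, ∞)`. -/
theorem s_second_order_and_roots (d : ℝ) (hd : 0 < d) (c : ℝ)
    (hc : c = 1 / Real.sqrt (9 * d)) :
    (∀ x, -1 / c < x →
      (deriv (fun x => x ^ 2 / 2 + d - d * (1 + c * x) ^ 3 + 3 * d * Real.log (1 + c * x)) x) ^ 2
        + deriv (deriv
            (fun x => x ^ 2 / 2 + d - d * (1 + c * x) ^ 3 + 3 * d * Real.log (1 + c * x))) x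
      = c ^ 2 * x ^ 2 * (c ^ 2 * x ^ 4 - 6 * c * x - 9) / (9 * (c * x + 1) ^ 2)) ∧
    (3 < 9 * d →
      (∃! x, x ∈ Set.Ioo (-1 / c) 0 ∧ c ^ 2 * x ^ 4 - 6 * c * x - 9 = 0) ∧
      (∃! x, x ∈ Set.Ioi (0 : ℝ) ∧ c ^ 2 * x ^ 4 - 6 * c * x - 9 = 0)) := by
  have h9d : 0 < 9 * d := by positivity
  have hc0 : 0 < c := by rw [hc]; positivity
  have hcd : 9 * d * c ^ 2 = 1 := by
    rw [hc, div_pow, Real.sq_sqrt h9d.le]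
    field_simp
  refine ⟨fun x hx => ?_, fun h3d => ⟨existsUnique_quartic_root_Ioo hc0 (by nlinarith),
    existsUnique_quartic_root_Ioi hc0⟩⟩
  have hx' : 0 < 1 + c * x := by
    have := (div_lt_iff₀ hc0).mp hx
    linarith
  exact deriv_sFun_sq_add_deriv_deriv hcd hx'
end
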